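/- The vector |χ₂(x)⟩ = (x (a⁺)²; p⁴)_∞^{-1}|0⟩ satisfies (a⁻ - x a⁺)|χ₂(x)⟩ = 0. -/
import Mathlib


noncomputable def aPlus (p : ℝ) (v : ℕ → ℂ) : ℕ → ℂ := fun m =>
  match m with
  | 0 => 0
  | Nat.succ m => ((Real.sqrt (1 - p ^ (2 * m + 2)) : ℝ) : ℂ) * v m

noncomputable def aMinus (p : ℝ) (v : ℕ → ℂ) : ℕ → ℂ := fun m =>
  ((Real.sqrt (1 - p ^ (2 * m + 2)) : ℝ) : ℂ) * v (m + 1)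

noncomputable def qPoch (a q : ℝ) (m : ℕ) : ℝ := ∏ i ∈ Finset.range m, (1 - a * q ^ i)

/-- `|χ₂(x)⟩ = (x (a⁺)²; p⁴)_∞^{-1}|0⟩ = Σ_j x^j (a⁺)^{2j}/(p⁴;p⁴)_j |0⟩`;
its coefficient on `|2j⟩` is `x^j √((p²;p²)_{2j})/(p⁴;p⁴)_j` and odd
coefficients vanish. -/
noncomputable def chi2 (p x : ℝ) : ℕ → ℂ := fun m =>
  if m % 2 = 0 then
    (x : ℂ) ^ (m / 2) * ((Real.sqrt (qPoch (p ^ 2) (p ^ 2) m) : ℝ) : ℂ)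
      / ((qPoch (p ^ 4) (p ^ 4) (m / 2) : ℝ) : ℂ)
  else 0

lemma qPoch_succ (a q : ℝ) (m : ℕ) :
    qPoch a q (m + 1) = qPoch a q m * (1 - a * q ^ m) :=
  Finset.prod_range_succ _ _

lemma qPoch_nonneg {a q : ℝ} (ha0 : 0 ≤ a) (ha : a ≤ 1) (hq0 : 0 ≤ q) (hq : q ≤ 1)
    (m : ℕ) : 0 ≤ qPoch a q m := by
  apply Finset.prod_nonneg
  intro i _
  have : a * q ^ i ≤ 1 := by
    calc a * q ^ i ≤ 1 * 1 := by
          apply mul_le_mul ha (pow_le_one₀ hq0 hq) (pow_nonneg hq0 i) one_pos.le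
    _ = 1 := by ring
  linarith

lemma qPoch_pos {a q : ℝ} (ha0 : 0 ≤ a) (ha : a < 1) (hq0 : 0 ≤ q) (hq : q ≤ 1)
    (m : ℕ) : 0 < qPoch a q m := by
  apply Finset.prod_pos
  intro i _
  have : a * q ^ i < 1 := by
    calc a * q ^ i ≤ a * 1 := by
          apply mul_le_mul_of_nonneg_left (pow_le_one₀ hq0 hq) ha0
    _ = a := by ring
    _ < 1 := ha
  linarith

lemma key_real (p : ℝ) (hp : 0 < p) (hp1 : p < 1) (j : ℕ) :
    Real.sqrt (1 - p ^ (2 * (j + j + 1) + 2)) *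
        Real.sqrt (qPoch (p ^ 2) (p ^ 2) (j + j + 2)) / qPoch (p ^ 4) (p ^ 4) (j + 1)
      = Real.sqrt (1 - p ^ (2 * (j + j) + 2)) *
        Real.sqrt (qPoch (p ^ 2) (p ^ 2) (j + j)) / qPoch (p ^ 4) (p ^ 4) j := by
  have hp0 : (0:ℝ) ≤ p := hp.le
  have hle : ∀ k : ℕ, 1 ≤ k → p ^ k < 1 := fun k hk => pow_lt_one₀ hp0 hp1 (by omega)
  have hp2 : (0:ℝ) ≤ p ^ 2 := by positivity
  have hp21 : p ^ 2 ≤ 1 := (hle 2 (by norm_num)).le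
  have hp4 : (0:ℝ) ≤ p ^ 4 := by positivity
  have hp41 : p ^ 4 < 1 := hle 4 (by norm_num)
  have hA : 0 ≤ qPoch (p ^ 2) (p ^ 2) (j + j) := qPoch_nonneg hp2 hp21 hp2 hp21 _
  have hb : (1 : ℝ) - p ^ 2 * (p ^ 2) ^ (j + j) = 1 - p ^ (2 * (j + j) + 2) := by ring
  have hc : (1 : ℝ) - p ^ 2 * (p ^ 2) ^ (j + j + 1) = 1 - p ^ (2 * (j + j + 1) + 2) := by
    ring
  have hc4 : (1 : ℝ) - p ^ 4 * (p ^ 4) ^ j = 1 - p ^ (2 * (j + j + 1) + 2) := by ring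
  have hbpos : 0 ≤ 1 - p ^ (2 * (j + j) + 2) := by
    have := hle (2 * (j + j) + 2) (by omega); linarith
  have hcpos : 0 < 1 - p ^ (2 * (j + j + 1) + 2) := by
    have := hle (2 * (j + j + 1) + 2) (by omega); linarith
  have hD : 0 < qPoch (p ^ 4) (p ^ 4) j := qPoch_pos hp4 hp41 hp4 hp41.le _
  rw [show j + j + 2 = (j + j + 1) + 1 from rfl, qPoch_succ, qPoch_succ, qPoch_succ,
    hb, hc, hc4]
  rw [Real.sqrt_mul (by exact mul_nonneg hA hbpos), Real.sqrt_mul hA]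
  rw [div_eq_div_iff (by positivity) (ne_of_gt hD)]
  have hs : Real.sqrt (1 - p ^ (2 * (j + j + 1) + 2)) *
      Real.sqrt (1 - p ^ (2 * (j + j + 1) + 2)) = 1 - p ^ (2 * (j + j + 1) + 2) :=
    Real.mul_self_sqrt hcpos.le
  linear_combination Real.sqrt (qPoch (p ^ 2) (p ^ 2) (j + j)) *
    Real.sqrt (1 - p ^ (2 * (j + j) + 2)) * qPoch (p ^ 4) (p ^ 4) j * hs

/-- `(a⁻ - x a⁺)|χ₂(x)⟩ = 0`. -/
theorem chi2_eq (p x : ℝ) (hp : 0 < p) (hp1 : p < 1) :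
    aMinus p (chi2 p x) - (x : ℂ) • aPlus p (chi2 p x) = 0 := by
  funext m
  simp only [Pi.sub_apply, Pi.smul_apply, Pi.zero_apply, smul_eq_mul]
  cases m with
  | zero =>
    simp [aMinus, aPlus, chi2]
  | succ n =>
    rcases Nat.even_or_odd n with ⟨j, rfl⟩ | ⟨j, rfl⟩
    · -- n = j + j, index j+j+1
      have h1 : (j + j + 1 + 1) % 2 = 0 := by omega
      have h2 : (j + j + 1 + 1) / 2 = j + 1 := by omega
      have h3 : (j + j) % 2 = 0 := by omega
      have h4 : (j + j) / 2 = j := by omega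
      simp only [aMinus, aPlus, chi2, h1, h2, h3, h4, if_true, if_pos]
      have key := key_real p hp hp1 j
      have keyC : ((Real.sqrt (1 - p ^ (2 * (j + j + 1) + 2)) : ℝ) : ℂ) *
          ((Real.sqrt (qPoch (p ^ 2) (p ^ 2) (j + j + 2)) : ℝ) : ℂ) /
          ((qPoch (p ^ 4) (p ^ 4) (j + 1) : ℝ) : ℂ)
          = ((Real.sqrt (1 - p ^ (2 * (j + j) + 2)) : ℝ) : ℂ) *
          ((Real.sqrt (qPoch (p ^ 2) (p ^ 2) (j + j)) : ℝ) : ℂ) /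
          ((qPoch (p ^ 4) (p ^ 4) j : ℝ) : ℂ) := by
        exact_mod_cast congrArg Complex.ofReal key
      have hidx : j + j + 1 + 1 = j + j + 2 := by ring
      rw [hidx]
      linear_combination (x : ℂ) ^ (j + 1) * keyC
    · -- n = 2*j + 1, index 2j+2, both chi2 terms vanish
      have h1 : (2 * j + 1 + 1 + 1) % 2 = 1 := by omega
      have h2 : (2 * j + 1) % 2 = 1 := by omega
      simp [aMinus, aPlus, chi2, h1, h2]
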